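/- arXiv:2007.00321 — 3 statements merged into one kernel-verified Lean document; each statement's English description precedes it below -/
import Mathlib

section
/- Let A be an n×n complex matrix and T > 0. The matrix B = ∫₀ᵀ e^{At} dt is invertible if and only if for every eigenvalue λ of A, λT ∉ 2πi·(ℤ \ {0}). -/
open Matrix MeasureTheory

/-!
If `A v = λ v`, then `e^{tA} v = e^{λt} v`, so `B v = s(λ) v` with `s(λ) = ∫₀ᵀ e^{λt} dt`, and
`s(λ) = 0` exactly when `λT ∈ 2πi(ℤ ∖ {0})`. Hence an eigenvalue with `s(λ) = 0` makes `B`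
singular. Conversely `B` commutes with `A`, so the kernel of a singular `B` is a nonzero
`A`-invariant subspace; it contains an eigenvector of `A`, whose eigenvalue then has `s(λ) = 0`.
-/

namespace Module.End

variable {K V : Type*} [Field K] [IsAlgClosed K] [AddCommGroup V] [Module K V]
  [FiniteDimensional K V]

theorem exists_hasEigenvector_of_commute_of_not_isUnit {f g : End K V} (hfg : Commute f g)
    (hg : ¬IsUnit g) : ∃ μ x, f.HasEigenvector μ x ∧ g x = 0 := by
  have hker : g.eigenspace 0 ≠ ⊥ :=
    hasEigenvalue_iff_mem_spectrum.2 ((spectrum.zero_mem_iff K).2 hg)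
  have hf : ∀ x ∈ g.eigenspace 0, f x ∈ g.eigenspace 0 :=
    fun x hx => mapsTo_genEigenspace_of_comm hfg.symm 0 1 hx
  have : Nontrivial (g.eigenspace 0) := Submodule.nontrivial_iff_ne_bot.2 hker
  obtain ⟨μ, hμ⟩ := exists_eigenvalue (f.restrict hf)
  obtain ⟨x, hx⟩ := hμ.exists_hasEigenvector
  refine ⟨μ, x, ⟨mem_eigenspace_iff.2 ?_, ?_⟩, ?_⟩
  · simpa using congrArg Subtype.val (mem_eigenspace_iff.1 hx.1)
  · exact fun h => hx.2 (Subtype.ext h)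
  · simpa using mem_eigenspace_iff.1 x.2

theorem isUnit_iff_forall_hasEigenvalue_of_commute {f g : End K V} (hfg : Commute f g)
    (c : K → K) (hg : ∀ μ x, f x = μ • x → g x = c μ • x) :
    IsUnit g ↔ ∀ μ, f.HasEigenvalue μ → c μ ≠ 0 := by
  constructor
  · intro hU μ hμ hc
    obtain ⟨x, hx⟩ := hμ.exists_hasEigenvector
    have hgx : g x = g 0 := by rw [hg μ x hx.apply_eq_smul, hc, zero_smul, map_zero]
    exact hx.2 (((isUnit_iff g).1 hU).injective hgx)
  · contrapose!
    intro hU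
    obtain ⟨μ, x, hx, hgx⟩ := exists_hasEigenvector_of_commute_of_not_isUnit hfg hU
    refine ⟨μ, hasEigenvalue_of_hasEigenvector hx, ?_⟩
    rw [hg μ x hx.apply_eq_smul] at hgx
    exact (smul_eq_zero.1 hgx).resolve_right hx.2

end Module.End

namespace Matrix

theorem isUnit_iff_forall_mem_spectrum_of_commute {K n : Type*} [Field K] [IsAlgClosed K]
    [Fintype n] [DecidableEq n] {A B : Matrix n n K} (hAB : Commute A B) (c : K → K)
    (hB : ∀ μ v, A *ᵥ v = μ • v → B *ᵥ v = c μ • v) :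
    IsUnit B ↔ ∀ μ ∈ spectrum K A, c μ ≠ 0 := by
  have hAB' : Commute (toLin' A) (toLin' B) := hAB.map toLinAlgEquiv'
  rw [← isUnit_toLin'_iff, ← spectrum_toLin',
    Module.End.isUnit_iff_forall_hasEigenvalue_of_commute hAB' c
      (by simpa only [toLin'_apply] using hB)]
  simp only [Module.End.hasEigenvalue_iff_mem_spectrum]

variable {𝕜 l m n : Type*} [RCLike 𝕜]

theorem pow_mulVec_of_mulVec_eq_smul [Fintype n] [DecidableEq n] {M : Matrix n n 𝕜}
    {v : n → 𝕜} {μ : 𝕜} (h : M *ᵥ v = μ • v) (k : ℕ) : M ^ k *ᵥ v = μ ^ k • v := by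
  induction k with
  | zero => simp
  | succ k ih => rw [pow_succ, ← mulVec_mulVec, h, mulVec_smul, ih, smul_smul, ← pow_succ']

section LinftyOpNorm

attribute [local instance] Matrix.linftyOpNormedRing Matrix.linftyOpNormedAlgebra

theorem exp_mulVec_of_mulVec_eq_smul [Fintype n] [DecidableEq n] {M : Matrix n n ℂ}
    {v : n → ℂ} {μ : ℂ} (h : M *ᵥ v = μ • v) :
    NormedSpace.exp M *ᵥ v = Complex.exp μ • v := by
  let mulVecL : Matrix n n ℂ →L[ℂ] (n → ℂ) :=
    LinearMap.toContinuousLinearMap ((mulVecBilin ℂ ℂ).flip v)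
  have hM := (NormedSpace.exp_series_hasSum_exp' (𝕂 := ℂ) M).mapL mulVecL
  have hμ := (NormedSpace.exp_series_hasSum_exp' (𝕂 := ℂ) μ).smul_const v
  simp only [mulVecL, LinearMap.coe_toContinuousLinearMap', LinearMap.flip_apply,
    mulVecBilin_apply, smul_mulVec, pow_mulVec_of_mulVec_eq_smul h, smul_smul] at hM hμ
  rw [Complex.exp_eq_exp_ℂ]
  exact hM.unique hμ

theorem continuous_exp_smul_apply [Fintype n] [DecidableEq n] (A : Matrix n n ℂ) (i j : n) :
    Continuous fun t : ℝ => NormedSpace.exp (t • A) i j :=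
  (continuous_apply_apply i j).comp
    (NormedSpace.exp_continuous.comp (continuous_id.smul continuous_const) :
      Continuous fun t : ℝ => NormedSpace.exp (t • A))

end LinftyOpNorm

variable {a b : ℝ}

theorem of_intervalIntegral_mulVec [Fintype n] {F : ℝ → Matrix m n 𝕜}
    (hF : ∀ i j, IntervalIntegrable (fun t => F t i j) volume a b) (v : n → 𝕜) :
    (of fun i j => ∫ t in a..b, F t i j) *ᵥ v = fun i => ∫ t in a..b, (F t *ᵥ v) i := by
  ext i
  simp only [mulVec, dotProduct, of_apply, ← intervalIntegral.integral_mul_const]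
  exact (intervalIntegral.integral_finsetSum fun j _ => (hF i j).mul_const _).symm

theorem mul_of_intervalIntegral [Fintype m] {F : ℝ → Matrix m n 𝕜}
    (hF : ∀ i j, IntervalIntegrable (fun t => F t i j) volume a b) (M : Matrix l m 𝕜) :
    M * (of fun i j => ∫ t in a..b, F t i j) = of fun i j => ∫ t in a..b, (M * F t) i j := by
  ext i j
  simp only [mul_apply, of_apply, ← intervalIntegral.integral_const_mul]
  exact (intervalIntegral.integral_finsetSum fun k _ => (hF k j).const_mul _).symm

theorem of_intervalIntegral_mul [Fintype m] {F : ℝ → Matrix l m 𝕜}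
    (hF : ∀ i j, IntervalIntegrable (fun t => F t i j) volume a b) (M : Matrix m n 𝕜) :
    (of fun i j => ∫ t in a..b, F t i j) * M = of fun i j => ∫ t in a..b, (F t * M) i j := by
  ext i j
  simp only [mul_apply, of_apply, ← intervalIntegral.integral_mul_const]
  exact (intervalIntegral.integral_finsetSum fun k _ => (hF i k).mul_const _).symm

end Matrix

open Complex Real in
theorem integral_cexp_mul_eq_zero_iff {T : ℝ} (hT : T ≠ 0) (z : ℂ) :
    ∫ t in (0:ℝ)..T, cexp (z * t) = 0 ↔ ∃ k : ℤ, k ≠ 0 ∧ z * T = 2 * π * I * k := by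
  rcases eq_or_ne z 0 with rfl | hz
  · simpa using hT
  rw [integral_exp_mul_complex hz, div_eq_zero_iff, or_iff_left hz, ofReal_zero, mul_zero,
    Complex.exp_zero, sub_eq_zero, Complex.exp_eq_one_iff]
  constructor
  · rintro ⟨k, hk⟩
    refine ⟨k, ?_, by rw [hk]; ring⟩
    rintro rfl
    simp [hz, hT] at hk
  · rintro ⟨k, -, hk⟩
    exact ⟨k, by rw [hk]; ring⟩

section IntegralExp

variable {n : Type*} [Fintype n] [DecidableEq n]

noncomputable def integralExp (A : Matrix n n ℂ) (T : ℝ) : Matrix n n ℂ :=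
  of fun i j => ∫ t in (0:ℝ)..T, NormedSpace.exp (t • A) i j

theorem intervalIntegrable_exp_smul_apply (A : Matrix n n ℂ) (T : ℝ) (i j : n) :
    IntervalIntegrable (fun t : ℝ => NormedSpace.exp (t • A) i j) volume 0 T :=
  (continuous_exp_smul_apply A i j).intervalIntegrable 0 T

theorem integralExp_mulVec_of_mulVec_eq_smul {A : Matrix n n ℂ} {v : n → ℂ} {μ : ℂ}
    (h : A *ᵥ v = μ • v) (T : ℝ) :
    integralExp A T *ᵥ v = (∫ t in (0:ℝ)..T, Complex.exp (μ * t)) • v := by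
  have hexp (t : ℝ) : NormedSpace.exp (t • A) *ᵥ v = Complex.exp (μ * t) • v :=
    exp_mulVec_of_mulVec_eq_smul (by rw [smul_mulVec, h, ← Complex.coe_smul, smul_smul, mul_comm])
  rw [integralExp, of_intervalIntegral_mulVec (intervalIntegrable_exp_smul_apply A T) v]
  ext i
  simp only [hexp, Pi.smul_apply, smul_eq_mul, intervalIntegral.integral_mul_const]

theorem commute_integralExp (A : Matrix n n ℂ) (T : ℝ) : Commute A (integralExp A T) := by
  have hcomm (t : ℝ) : A * NormedSpace.exp (t • A) = NormedSpace.exp (t • A) * A :=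
    ((Commute.refl A).smul_right t).exp_right.eq
  rw [Commute, SemiconjBy, integralExp,
    mul_of_intervalIntegral (intervalIntegrable_exp_smul_apply A T),
    of_intervalIntegral_mul (intervalIntegrable_exp_smul_apply A T)]
  simp only [hcomm]

end IntegralExp

/-- For `A : Matrix (Fin n) (Fin n) ℂ` and `T > 0`, the matrix
`B = ∫₀ᵀ e^{At} dt` (entrywise integral) is invertible iff no eigenvalue `λ` of `A`
satisfies `λ T ∈ 2πi (ℤ \ {0})`. -/
theorem integral_exp_invertible_iff (n : ℕ) (A : Matrix (Fin n) (Fin n) ℂ) (T : ℝ)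
    (hT : 0 < T) :
    IsUnit (Matrix.of fun i j => ∫ t in (0:ℝ)..T, (NormedSpace.exp (t • A)) i j) ↔
      ∀ lam ∈ spectrum ℂ A, ∀ k : ℤ, k ≠ 0 →
        lam * (T : ℂ) ≠ 2 * Real.pi * Complex.I * (k : ℂ) := by
  change IsUnit (integralExp A T) ↔ _
  rw [isUnit_iff_forall_mem_spectrum_of_commute (commute_integralExp A T) _
    fun μ v h => integralExp_mulVec_of_mulVec_eq_smul h T]
  refine forall₂_congr fun μ _ => ?_
  rw [ne_eq, integral_cexp_mul_eq_zero_iff hT.ne']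
  simp only [not_exists, not_and]
end

section
/- A real invertible 2×2 matrix whose Jordan form is the single 2×2 Jordan block (λ, 1; 0, λ) with λ < 0 does not have a real logarithm. -/
/-!
If `e^L = A`, then `L` commutes with the nonzero square-zero matrix `N = A - λ`. Its range is a
line, which `L` preserves, so `L N = μ N` for some real `μ`, and then `e^L N = e^μ N`. Since also
`A N = λ N`, this forces `e^μ = λ < 0`.
-/

open Matrix Module

theorem NormedSpace.exp_mul_of_mul_eq_smul {𝕂 𝔸 : Type*} [RCLike 𝕂] [NormedRing 𝔸]
    [NormedAlgebra 𝕂 𝔸] [CompleteSpace 𝔸] {a b : 𝔸} {μ : 𝕂} (h : a * b = μ • b) :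
    exp a * b = exp μ • b := by
  have hpow (n : ℕ) : a ^ n * b = μ ^ n • b := by
    induction n with
    | zero => simp
    | succ n ih => rw [pow_succ', mul_assoc, ih, mul_smul_comm, h, smul_smul, pow_succ]
  have hterm : (fun n : ℕ => ((n.factorial : 𝕂)⁻¹ • a ^ n) * b) =
      fun n => ((n.factorial : 𝕂)⁻¹ • μ ^ n) • b := by
    funext n
    rw [smul_mul_assoc, hpow, smul_smul, smul_eq_mul]
  have hsum := (exp_series_hasSum_exp' (𝕂 := 𝕂) a).mul_right b
  rw [hterm] at hsum
  exact hsum.unique ((exp_series_hasSum_exp' (𝕂 := 𝕂) μ).smul_const b)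

theorem Matrix.exp_mul_of_mul_eq_smul {𝕂 m : Type*} [RCLike 𝕂] [Fintype m] [DecidableEq m]
    {A B : Matrix m m 𝕂} {μ : 𝕂} (h : A * B = μ • B) :
    NormedSpace.exp A * B = NormedSpace.exp μ • B := by
  open scoped Norms.Operator in exact NormedSpace.exp_mul_of_mul_eq_smul h

theorem Module.End.two_mul_finrank_range_le_of_mul_self_eq_zero {K V : Type*} [Field K]
    [AddCommGroup V] [Module K V] [FiniteDimensional K V] {f : Module.End K V} (hf : f * f = 0) :
    2 * finrank K (LinearMap.range f) ≤ finrank K V := by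
  have hle : finrank K (LinearMap.range f) ≤ finrank K (LinearMap.ker f) :=
    Submodule.finrank_mono (LinearMap.range_le_ker_iff.mpr hf)
  have := LinearMap.finrank_range_add_finrank_ker f
  omega

theorem Module.End.exists_mul_eq_smul_of_commute {K V : Type*} [Field K] [AddCommGroup V]
    [Module K V] [FiniteDimensional K V] {f g : Module.End K V}
    (hf : finrank K (LinearMap.range f) ≤ 1) (hgf : Commute g f) : ∃ μ : K, g * f = μ • f := by
  obtain ⟨v, hv⟩ := finrank_le_one_iff.mp hf
  have hgv : g v ∈ LinearMap.range f := by
    obtain ⟨x, hx⟩ := v.2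
    exact ⟨g x, by rw [← hx, ← Module.End.mul_apply, ← hgf.eq, Module.End.mul_apply]⟩
  obtain ⟨μ, hμ⟩ := hv ⟨g v, hgv⟩
  refine ⟨μ, LinearMap.ext fun x => ?_⟩
  obtain ⟨c, hc⟩ := hv ⟨f x, LinearMap.mem_range_self f x⟩
  have hfx : f x = c • (v : V) := (congrArg Subtype.val hc).symm
  have hgv' : g v = μ • (v : V) := (congrArg Subtype.val hμ).symm
  rw [Module.End.mul_apply, LinearMap.smul_apply, hfx, map_smul, hgv', smul_comm]

theorem Matrix.exists_mul_eq_smul_of_commute_of_mul_self_eq_zero {K : Type*} [Field K]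
    {L N : Matrix (Fin 2) (Fin 2) K} (hN : N * N = 0) (hLN : Commute L N) :
    ∃ μ : K, L * N = μ • N := by
  let e := Matrix.toLinAlgEquiv' (R := K) (n := Fin 2)
  have hrank : finrank K (LinearMap.range (e N)) ≤ 1 := by
    have := Module.End.two_mul_finrank_range_le_of_mul_self_eq_zero
      (f := e N) (by rw [← map_mul, hN, map_zero])
    rw [finrank_fin_fun] at this
    omega
  obtain ⟨μ, hμ⟩ := Module.End.exists_mul_eq_smul_of_commute hrank (hLN.map e)
  exact ⟨μ, e.injective (by rw [map_mul, map_smul, hμ])⟩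

theorem Matrix.sub_smul_one_mul_self_eq_zero_and_ne_zero {R S : Type*} [CommRing R]
    [CommRing S] [Nontrivial S] (f : R →+* S) (hf : Function.Injective f)
    {A : Matrix (Fin 2) (Fin 2) R} {c : R} {P : Matrix (Fin 2) (Fin 2) S} (hP : IsUnit P)
    (hA : A.map f = P * !![f c, 1; 0, f c] * P⁻¹) :
    (A - c • 1) * (A - c • 1) = 0 ∧ A - c • 1 ≠ 0 := by
  have hdet := (Matrix.isUnit_iff_isUnit_det P).mp hP
  let φ := f.mapMatrix (m := Fin 2)
  set E : Matrix (Fin 2) (Fin 2) S := !![0, 1; 0, 0]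
  have hN : φ (A - c • 1) = P * E * P⁻¹ := by
    have hJ : !![f c, 1; 0, f c] = E + f c • 1 := by
      ext i j; fin_cases i <;> fin_cases j <;> simp [E]
    have hc : φ (c • 1) = f c • 1 := by
      rw [smul_one_eq_diagonal, smul_one_eq_diagonal, RingHom.mapMatrix_apply,
        diagonal_map (map_zero f)]
    rw [map_sub, hc, RingHom.mapMatrix_apply, hA, hJ, mul_add, add_mul, mul_smul_comm, mul_one,
      smul_mul_assoc, mul_nonsing_inv P hdet, add_sub_cancel_right]
  constructor
  · have hE : E * E = 0 := by ext i j; fin_cases i <;> fin_cases j <;> simp [E]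
    apply Matrix.map_injective hf
    change φ _ = φ 0
    rw [map_mul, hN, map_zero]
    calc P * E * P⁻¹ * (P * E * P⁻¹) = P * E * (P⁻¹ * (P * (E * P⁻¹))) := by
          simp only [mul_assoc]
      _ = P * (E * E) * P⁻¹ := by rw [nonsing_inv_mul_cancel_left P _ hdet]; simp only [mul_assoc]
      _ = 0 := by rw [hE, mul_zero, zero_mul]
  · intro h0
    have hE : P⁻¹ * (P * E * P⁻¹) * P = 0 := by rw [← hN, h0, map_zero]; simp
    rw [mul_assoc P E, nonsing_inv_mul_cancel_left P _ hdet,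
      nonsing_inv_mul_cancel_right P _ hdet] at hE
    simpa [E] using congrFun (congrFun hE 0) 1

/-- a real invertible `2 × 2` matrix whose Jordan form is the single Jordan
block `(λ, 1; 0, λ)` with `λ < 0` has no real logarithm. -/
theorem no_real_log_of_jordan_block (A : Matrix (Fin 2) (Fin 2) ℝ) (lam : ℝ) (hlam : lam < 0)
    (hsim : ∃ P : Matrix (Fin 2) (Fin 2) ℂ, IsUnit P ∧
      A.map Complex.ofReal = P * !![(lam : ℂ), 1; 0, (lam : ℂ)] * P⁻¹) :
    ¬ ∃ L : Matrix (Fin 2) (Fin 2) ℝ, NormedSpace.exp L = A := by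
  rintro ⟨L, rfl⟩
  obtain ⟨P, hP, hA⟩ := hsim
  set N := NormedSpace.exp L - lam • 1
  obtain ⟨hNN, hN0⟩ := Matrix.sub_smul_one_mul_self_eq_zero_and_ne_zero Complex.ofRealHom
    Complex.ofReal_injective hP hA
  have hLN : Commute L N :=
    (Commute.refl L).exp_right.sub_right ((Commute.one_right L).smul_right lam)
  obtain ⟨μ, hμ⟩ := Matrix.exists_mul_eq_smul_of_commute_of_mul_self_eq_zero hNN hLN
  have hexp : NormedSpace.exp L * N = Real.exp μ • N := by
    rw [Real.exp_eq_exp_ℝ]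
    exact Matrix.exp_mul_of_mul_eq_smul hμ
  have hlamN : NormedSpace.exp L * N = lam • N := by
    calc NormedSpace.exp L * N = (N + lam • 1) * N := by rw [sub_add_cancel]
      _ = lam • N := by rw [add_mul, hNN, zero_add, smul_one_mul]
  have : Real.exp μ = lam := smul_left_injective ℝ hN0 (hexp.symm.trans hlamN)
  linarith [Real.exp_pos μ]
end

section
/- Let W̃ ∈ ℂ^{M×M} be block-diagonalizable as W̃ = V [[0_{n×n}, 0],[0, C]] V^{−1} with C invertible, and suppose W̃ Z* = −h̃. Set W = e^{W̃ Δt} and h = e^{W̃ Δt} V [[ΔtI_n, 0],[0, −C^{−1}(e^{−CΔt} − I)]] V^{−1} h̃. Then h = (I − W) Z*. -/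
open Matrix NormedSpace

/-!
Conjugating by `V`, `W̃ Δt` becomes `diag(0, C Δt)`, so `W = V diag(I, E) V⁻¹` with `E = e^{CΔt}`.
Since `C` commutes with `e^{-CΔt}`, the `C`-block of `W V [[ΔtI, 0], [0, -C⁻¹(e^{-CΔt} - I)]] V⁻¹ W̃`
is `E (I - e^{-CΔt}) = E - I`, while its kernel block is killed by the zero block of `W̃`.
Hence this product equals `W - I`, and applying it to `Z*` with `W̃ Z* = -h̃` gives `h = (I - W) Z*`.
-/

namespace Matrix

variable {n m α 𝔸 : Type*} [Fintype n] [DecidableEq n] [Fintype m] [DecidableEq m]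

section CommRing

variable [CommRing α]

theorem conj_mul_conj {V : Matrix n n α} (hV : IsUnit V) (A B : Matrix n n α) :
    V * A * V⁻¹ * (V * B * V⁻¹) = V * (A * B) * V⁻¹ := by
  simp only [Matrix.mul_assoc, nonsing_inv_mul_cancel_left _ _ ((isUnit_iff_isUnit_det V).mp hV)]

theorem conj_sub_one {V : Matrix n n α} (hV : IsUnit V) (A : Matrix n n α) :
    V * A * V⁻¹ - 1 = V * (A - 1) * V⁻¹ := by
  rw [Matrix.mul_sub, Matrix.sub_mul, Matrix.mul_one,
    mul_nonsing_inv _ ((isUnit_iff_isUnit_det V).mp hV)]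

end CommRing

section NormedRing

variable [NormedRing 𝔸] [NormedAlgebra ℚ 𝔸] [CompleteSpace 𝔸]

open scoped Matrix.Norms.Operator in
theorem exp_fromBlocks_zero_zero (A : Matrix n n 𝔸) (D : Matrix m m 𝔸) :
    exp (fromBlocks A 0 0 D) = fromBlocks (exp A) 0 0 (exp D) := by
  -- instance search does not see that the operator-norm uniformity is the entrywise one
  have : @CompleteSpace (Matrix n n 𝔸) PseudoMetricSpace.toUniformSpace :=
    inferInstanceAs (CompleteSpace (n → n → 𝔸))
  have : @CompleteSpace (Matrix m m 𝔸) PseudoMetricSpace.toUniformSpace :=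
    inferInstanceAs (CompleteSpace (m → m → 𝔸))
  let φ : Matrix n n 𝔸 × Matrix m m 𝔸 →+* Matrix (n ⊕ m) (n ⊕ m) 𝔸 :=
    { toFun p := fromBlocks p.1 0 0 p.2
      map_one' := fromBlocks_one
      map_mul' p q := by simp [fromBlocks_multiply]
      map_zero' := fromBlocks_zero
      map_add' p q := by simp [fromBlocks_add] }
  have hφ : Continuous φ :=
    continuous_fst.matrix_fromBlocks continuous_const continuous_const continuous_snd
  have hexp : exp (A, D) = (exp A, exp D) := Prod.ext (Prod.fst_exp _) (Prod.snd_exp _)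
  have key := map_exp φ hφ (A, D)
  erw [hexp] at key
  exact key.symm

end NormedRing

section NormedCommRing

variable [NormedCommRing 𝔸] [NormedAlgebra ℚ 𝔸] [CompleteSpace 𝔸]

theorem exp_mul_neg_inv_mul_exp_neg_sub_one_mul {A C : Matrix m m 𝔸} (hC : IsUnit C)
    (hCA : Commute C A) : exp A * -(C⁻¹ * (exp (-A) - 1)) * C = exp A - 1 := by
  have hC' : Commute C (exp (-A) - 1) := hCA.neg_right.exp_right.sub_right (Commute.one_right C)
  rw [Matrix.mul_assoc, Matrix.neg_mul, Matrix.mul_assoc, ← hC'.eq,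
    nonsing_inv_mul_cancel_left _ _ ((isUnit_iff_isUnit_det C).mp hC), Matrix.mul_neg,
    Matrix.mul_sub, ← exp_add_of_commute _ _ (Commute.refl A).neg_right, add_neg_cancel, exp_zero,
    Matrix.mul_one, neg_sub]

theorem fromBlocks_one_exp_mul_mul_fromBlocks_zero {A C : Matrix m m 𝔸} (hC : IsUnit C)
    (hCA : Commute C A) (P : Matrix n n 𝔸) :
    fromBlocks 1 0 0 (exp A) * fromBlocks P 0 0 (-(C⁻¹ * (exp (-A) - 1))) *
      fromBlocks 0 0 0 C = fromBlocks 1 0 0 (exp A) - 1 := by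
  rw [fromBlocks_multiply, fromBlocks_multiply, ← fromBlocks_one]
  simp only [Matrix.mul_zero, Matrix.zero_mul, add_zero, zero_add, Matrix.one_mul]
  rw [exp_mul_neg_inv_mul_exp_neg_sub_one_mul hC hCA]
  ext (i | i) (j | j) <;> simp [one_apply]

end NormedCommRing

end Matrix

theorem fixed_point_compat_block_general (n m : ℕ)
    (V : Matrix (Fin n ⊕ Fin m) (Fin n ⊕ Fin m) ℂ) (hV : IsUnit V)
    (C : Matrix (Fin m) (Fin m) ℂ) (hC : IsUnit C) (Δt : ℝ)
    (ht Zs : Fin n ⊕ Fin m → ℂ)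
    (Wt : Matrix (Fin n ⊕ Fin m) (Fin n ⊕ Fin m) ℂ)
    (hWt : Wt = V * Matrix.fromBlocks 0 0 0 C * V⁻¹)
    (heq : Wt.mulVec Zs = -ht) :
    (NormedSpace.exp (Δt • Wt)).mulVec
        ((V * Matrix.fromBlocks ((Δt : ℂ) • (1 : Matrix (Fin n) (Fin n) ℂ)) 0 0
            (-(C⁻¹ * (NormedSpace.exp (-(Δt • C)) - 1))) * V⁻¹).mulVec ht) =
      (1 - NormedSpace.exp (Δt • Wt)).mulVec Zs := by
  have hsmul : Δt • Wt = V * fromBlocks 0 0 0 (Δt • C) * V⁻¹ := by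
    rw [hWt, ← Matrix.smul_mul, ← Matrix.mul_smul, fromBlocks_smul]
    simp only [smul_zero]
  have hexp : exp (Δt • Wt) = V * fromBlocks 1 0 0 (exp (Δt • C)) * V⁻¹ := by
    rw [hsmul, exp_conj _ _ hV, exp_fromBlocks_zero_zero, exp_zero]
  have hkey : exp (Δt • Wt) * (V * fromBlocks ((Δt : ℂ) • 1) 0 0
      (-(C⁻¹ * (exp (-(Δt • C)) - 1))) * V⁻¹) * Wt = exp (Δt • Wt) - 1 := by
    rw [hexp, hWt, conj_mul_conj hV, conj_mul_conj hV, conj_sub_one hV,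
      fromBlocks_one_exp_mul_mul_fromBlocks_zero hC ((Commute.refl C).smul_right Δt)]
  rw [← neg_neg ht, ← heq, mulVec_mulVec, mulVec_neg, mulVec_mulVec, hkey, ← neg_mulVec, neg_sub]

/-- fixed-point consistency when `Wt = V [[0,0],[0,C]] V⁻¹` with `C`
invertible: if `Wt Z* = −ht` and
`h = e^{Wt Δt} V [[Δt I, 0],[0, −C⁻¹(e^{−CΔt} − I)]] V⁻¹ ht`, then
`h = (I − e^{Wt Δt}) Z*`. -/
theorem fixed_point_compat_block (n m : ℕ)
    (V : Matrix (Fin n ⊕ Fin m) (Fin n ⊕ Fin m) ℂ) (hV : IsUnit V)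
    (C : Matrix (Fin m) (Fin m) ℂ) (hC : IsUnit C) (Δt : ℝ) (hΔt : 0 < Δt)
    (ht Zs : Fin n ⊕ Fin m → ℂ)
    (Wt : Matrix (Fin n ⊕ Fin m) (Fin n ⊕ Fin m) ℂ)
    (hWt : Wt = V * Matrix.fromBlocks 0 0 0 C * V⁻¹)
    (heq : Wt.mulVec Zs = -ht) :
    (NormedSpace.exp (Δt • Wt)).mulVec
        ((V * Matrix.fromBlocks ((Δt : ℂ) • (1 : Matrix (Fin n) (Fin n) ℂ)) 0 0
            (-(C⁻¹ * (NormedSpace.exp (-(Δt • C)) - 1))) * V⁻¹).mulVec ht) =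
      (1 - NormedSpace.exp (Δt • Wt)).mulVec Zs :=
  fixed_point_compat_block_general n m V hV C hC Δt ht Zs Wt hWt heq
end
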